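/- arXiv:math/0611449 — 4 statements merged into one kernel-verified Lean document; each statement's English description precedes it below -/
import Mathlib

section
/- For every nonnegative integer m and every c > 0, one has τ^{2(m+1)} ∫₀^δ e^{-z²t} t^m dt → m!·(-i/(2c²))^{m+1} as τ → ∞, where z = -cτ(1 + i√(1 - 1/(c²τ))) and 0 < δ ≤ ∞ is fixed. -/
open MeasureTheory Filter Complex intervalIntegral

noncomputable def zfun (c τ : ℝ) : ℂ :=
  -(c * τ) * (1 + Complex.I * Real.sqrt (1 - 1 / (c ^ 2 * τ)))

lemma cont_aux (a : ℂ) (m : ℕ) :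
    Continuous (fun x : ℝ => Complex.exp (-a * x) * (x : ℂ) ^ m) := by
  fun_prop

lemma ibp (a : ℂ) (ha : a ≠ 0) (δ : ℝ) (m : ℕ) :
    ∫ x in (0:ℝ)..δ, Complex.exp (-a * x) * (x : ℂ) ^ (m + 1)
      = (((m : ℂ) + 1) * (∫ x in (0:ℝ)..δ, Complex.exp (-a * x) * (x : ℂ) ^ m)
          - (δ : ℂ) ^ (m + 1) * Complex.exp (-a * δ)) / a := by
  have hu : ∀ x ∈ Set.uIcc (0:ℝ) δ,
      HasDerivAt (fun x : ℝ => (x : ℂ) ^ (m + 1)) (((m : ℂ) + 1) * (x : ℂ) ^ m) x := by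
    intro x _
    have h1 : HasDerivAt (fun y : ℂ => y ^ (m + 1)) (((m : ℕ) + 1 : ℂ) * (x : ℂ) ^ m) (x : ℂ) := by
      simpa using hasDerivAt_pow (m + 1) (x : ℂ)
    have h2 := h1.comp_ofReal
    simpa using h2
  have hv : ∀ x ∈ Set.uIcc (0:ℝ) δ,
      HasDerivAt (fun x : ℝ => -Complex.exp (-a * x) / a) (Complex.exp (-a * x)) x := by
    intro x _
    have h1 : HasDerivAt (fun y : ℂ => -Complex.exp (-a * y) / a)
        (-(Complex.exp (-a * (x:ℂ)) * (-a)) / a) (x : ℂ) := by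
      have h0 := (Complex.hasDerivAt_exp (-a * (x : ℂ))).comp (x : ℂ)
        ((hasDerivAt_id (x : ℂ)).const_mul (-a))
      simpa [mul_comm] using (h0.neg).div_const a
    have h2 := h1.comp_ofReal
    have h3 : -(Complex.exp (-a * (x:ℂ)) * (-a)) / a = Complex.exp (-a * x) := by
      field_simp
    rw [h3] at h2
    exact h2
  have hui : IntervalIntegrable (fun x : ℝ => ((m : ℂ) + 1) * (x : ℂ) ^ m) volume 0 δ :=
    ((continuous_const.mul ((Complex.continuous_ofReal).pow m)).intervalIntegrable 0 δ)
  have hvi : IntervalIntegrable (fun x : ℝ => Complex.exp (-a * x)) volume 0 δ := by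
    apply Continuous.intervalIntegrable
    fun_prop
  have key := intervalIntegral.integral_mul_deriv_eq_deriv_mul hu hv hui hvi
  have e1 : (∫ x in (0:ℝ)..δ, (x : ℂ) ^ (m + 1) * Complex.exp (-a * x))
      = ∫ x in (0:ℝ)..δ, Complex.exp (-a * x) * (x : ℂ) ^ (m + 1) :=
    intervalIntegral.integral_congr (fun x _ => mul_comm _ _)
  have e2 : (∫ x in (0:ℝ)..δ, ((m : ℂ) + 1) * (x : ℂ) ^ m * (-Complex.exp (-a * x) / a))
      = (-(((m : ℂ) + 1)) / a) * ∫ x in (0:ℝ)..δ, Complex.exp (-a * x) * (x : ℂ) ^ m := by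
    rw [← intervalIntegral.integral_const_mul]
    apply intervalIntegral.integral_congr
    intro x _
    field_simp
  rw [e1, e2] at key
  set J := ∫ x in (0:ℝ)..δ, Complex.exp (-a * x) * (x : ℂ) ^ m with hJ
  set K := ∫ x in (0:ℝ)..δ, Complex.exp (-a * x) * (x : ℂ) ^ (m + 1) with hK
  clear_value J K
  rw [key]
  rw [show ((0:ℝ):ℂ) ^ (m + 1) = 0 by
    simp [Complex.ofReal_zero]]
  ring

lemma exp_int (a : ℂ) (ha : a ≠ 0) (δ : ℝ) :
    ∫ x in (0:ℝ)..δ, Complex.exp (-a * x) * (x : ℂ) ^ 0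
      = (1 - Complex.exp (-a * δ)) / a := by
  have e : (∫ x in (0:ℝ)..δ, Complex.exp (-a * x) * (x : ℂ) ^ 0)
      = ∫ x in (0:ℝ)..δ, Complex.exp (-a * x) := by
    apply intervalIntegral.integral_congr; intro x _; simp
  rw [e, integral_exp_mul_complex (neg_ne_zero.mpr ha)]
  simp only [Complex.ofReal_zero, mul_zero, Complex.exp_zero]
  rw [div_eq_div_iff (neg_ne_zero.mpr ha) ha]
  ring

lemma main_aux (c δ : ℝ) (hc : 0 < c) (hδ : 0 < δ) (m : ℕ) :
    Filter.Tendsto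
      (fun τ : ℝ => (τ : ℂ) ^ (2 * (m + 1)) *
        ∫ x in (0:ℝ)..δ, Complex.exp (-(zfun c τ) ^ 2 * x) * (x : ℂ) ^ m)
      Filter.atTop
      (nhds ((m.factorial : ℂ) * (-Complex.I / (2 * (c : ℂ) ^ 2)) ^ (m + 1))) := by
  set w : ℂ := -Complex.I / (2 * (c : ℂ) ^ 2) with hw
  have hc2 : (c : ℂ) ^ 2 ≠ 0 := by
    simpa using pow_ne_zero 2 (Complex.ofReal_ne_zero.mpr hc.ne')
  have hev : ∀ᶠ τ : ℝ in atTop, 1 / c ^ 2 ≤ τ ∧ 0 < τ :=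
    (eventually_ge_atTop (1 / c ^ 2)).and (eventually_gt_atTop 0)
  have hzsq : ∀ τ : ℝ, 1 / c ^ 2 ≤ τ → 0 < τ →
      (zfun c τ) ^ 2 = (τ : ℂ) +
        ((2 * c ^ 2 * τ ^ 2 * Real.sqrt (1 - 1 / (c ^ 2 * τ)) : ℝ) : ℂ) * Complex.I := by
    intro τ hτ1 hτ0
    have h1 : (0:ℝ) ≤ 1 - 1 / (c ^ 2 * τ) := by
      rw [sub_nonneg, div_le_one (by positivity)]
      calc (1:ℝ) = c ^ 2 * (1 / c ^ 2) := by field_simp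
      _ ≤ c ^ 2 * τ := by nlinarith [sq_nonneg c]
    have hs : ((Real.sqrt (1 - 1 / (c ^ 2 * τ)) : ℝ) : ℂ) ^ 2 * ((c:ℂ)^2 * (τ:ℂ))
        = (c:ℂ)^2 * (τ:ℂ) - 1 := by
      rw [← Complex.ofReal_pow, Real.sq_sqrt h1]
      have hne : (c:ℂ)^2 * (τ:ℂ) ≠ 0 :=
        mul_ne_zero hc2 (Complex.ofReal_ne_zero.mpr hτ0.ne')
      push_cast
      field_simp
      rw [mul_sub, mul_one, mul_one_div_cancel hne]
    unfold zfun
    push_cast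
    set s : ℂ := ((Real.sqrt (1 - 1 / (c ^ 2 * τ)) : ℝ) : ℂ)
    linear_combination (-(τ:ℂ)) * hs + ((c:ℂ)^2 * (τ:ℂ)^2 * s^2) * Complex.I_sq
  have hre : ∀ τ : ℝ, 1 / c ^ 2 ≤ τ → 0 < τ → ((zfun c τ) ^ 2).re = τ := by
    intro τ hτ1 hτ0
    rw [hzsq τ hτ1 hτ0]
    simp only [Complex.add_re, Complex.mul_I_re, Complex.ofReal_im, Complex.ofReal_re,
      neg_zero, add_zero]
  have hzne : ∀ τ : ℝ, 1 / c ^ 2 ≤ τ → 0 < τ → (zfun c τ) ^ 2 ≠ 0 := by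
    intro τ hτ1 hτ0 h0
    have h := hre τ hτ1 hτ0
    rw [h0] at h
    simp at h
    exact hτ0.ne h
  -- limit of τ²/z² → w
  have hL1 : Tendsto (fun τ : ℝ => (τ : ℂ) ^ 2 / (zfun c τ) ^ 2) atTop (nhds w) := by
    have hs1 : Tendsto (fun τ : ℝ => Real.sqrt (1 - 1 / (c ^ 2 * τ))) atTop (nhds 1) := by
      have h3 : Tendsto (fun τ : ℝ => 1 - 1 / (c ^ 2 * τ)) atTop (nhds 1) := by
        have h2 : Tendsto (fun τ : ℝ => 1 / (c ^ 2 * τ)) atTop (nhds 0) := by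
          apply Tendsto.div_atTop tendsto_const_nhds
          exact tendsto_id.const_mul_atTop (by positivity)
        simpa using tendsto_const_nhds.sub h2
      have h4 := (Real.continuous_sqrt.continuousAt (x := (1:ℝ))).tendsto.comp h3
      simpa [Function.comp_def] using h4
    have hinv : Tendsto (fun τ : ℝ => (zfun c τ) ^ 2 / (τ : ℂ) ^ 2) atTop
        (nhds (2 * Complex.I * (c : ℂ) ^ 2)) := by
      have h1 : Tendsto (fun τ : ℝ => 1 / (τ : ℂ)
          + 2 * Complex.I * (c : ℂ) ^ 2 * ((Real.sqrt (1 - 1 / (c ^ 2 * τ)) : ℝ) : ℂ))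
          atTop (nhds (0 + 2 * Complex.I * (c : ℂ) ^ 2 * 1)) := by
        apply Tendsto.add
        · have h6 : Tendsto (fun τ : ℝ => ((τ⁻¹ : ℝ) : ℂ)) atTop (nhds ((0:ℝ):ℂ)) :=
            (Complex.continuous_ofReal.continuousAt.tendsto).comp tendsto_inv_atTop_zero
          simp only [Complex.ofReal_zero] at h6
          apply h6.congr
          intro τ
          push_cast
          rw [one_div]
        · exact ((Complex.continuous_ofReal.continuousAt.tendsto).comp hs1).const_mul _
      rw [show (2 : ℂ) * Complex.I * (c : ℂ) ^ 2 = 0 + 2 * Complex.I * (c : ℂ) ^ 2 * 1 by ring]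
      apply h1.congr'
      filter_upwards [hev] with τ hτ
      obtain ⟨hτ1, hτ0⟩ := hτ
      rw [hzsq τ hτ1 hτ0]
      have hτne : (τ : ℂ) ≠ 0 := Complex.ofReal_ne_zero.mpr hτ0.ne'
      push_cast
      field_simp
    have h2ic : (2 : ℂ) * Complex.I * (c : ℂ) ^ 2 ≠ 0 := by
      simp [Complex.I_ne_zero, hc2]
    have hlim := hinv.inv₀ h2ic
    have hwval : w = ((2 : ℂ) * Complex.I * (c : ℂ) ^ 2)⁻¹ := by
      apply eq_inv_of_mul_eq_one_left
      rw [hw, div_mul_eq_mul_div, div_eq_one_iff_eq (mul_ne_zero two_ne_zero hc2)]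
      linear_combination (-2 * (c:ℂ)^2) * Complex.I_sq
    rw [← hwval] at hlim
    apply hlim.congr'
    filter_upwards [hev] with τ hτ
    obtain ⟨hτ1, hτ0⟩ := hτ
    rw [← one_div, one_div_div]
  -- τ^n e^{-z²δ} → 0
  have hL2 : ∀ n : ℕ, Tendsto (fun τ : ℝ => (τ : ℂ) ^ n * Complex.exp (-(zfun c τ) ^ 2 * δ))
      atTop (nhds 0) := by
    intro n
    rw [tendsto_zero_iff_norm_tendsto_zero]
    have hreal : Tendsto (fun τ : ℝ => τ ^ n * Real.exp (-(τ * δ))) atTop (nhds 0) := by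
      have h1 : Tendsto (fun τ : ℝ => δ * τ) atTop atTop :=
        tendsto_id.const_mul_atTop hδ
      have h2 := (Real.tendsto_pow_mul_exp_neg_atTop_nhds_zero n).comp h1
      have h3 := h2.const_mul ((1/δ) ^ n)
      simp only [mul_zero] at h3
      apply h3.congr
      intro τ
      simp only [Function.comp_apply]
      rw [Real.exp_neg, Real.exp_neg]
      field_simp
      ring_nf
      rw [← mul_pow, mul_inv_cancel₀ hδ.ne', one_pow, one_mul]
    apply squeeze_zero' (Eventually.of_forall fun τ => norm_nonneg _) ?_ hreal
    filter_upwards [hev] with τ hτ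
    obtain ⟨hτ1, hτ0⟩ := hτ
    have hnorm : ‖(τ : ℂ) ^ n * Complex.exp (-(zfun c τ) ^ 2 * δ)‖
        = τ ^ n * Real.exp (-(τ * δ)) := by
      rw [norm_mul, norm_pow, 
        Complex.norm_exp, Complex.norm_real]
      have hre2 : (-(zfun c τ) ^ 2 * (δ:ℂ)).re = -(τ * δ) := by
        have h := hre τ hτ1 hτ0
        have him : (-(zfun c τ) ^ 2 * (δ:ℂ)).re = -((zfun c τ) ^ 2).re * δ := by
          simp [Complex.mul_re]
        rw [him, h]
        ring
      rw [hre2, Real.norm_eq_abs, abs_of_pos hτ0]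
    exact le_of_eq hnorm
  -- main induction
  induction m with
  | zero =>
      have heq : ∀ᶠ τ : ℝ in atTop,
          ((τ : ℂ) ^ 2 / (zfun c τ) ^ 2) * 1 - ((τ : ℂ) ^ 2 / (zfun c τ) ^ 2)
              * Complex.exp (-(zfun c τ) ^ 2 * δ)
          = (τ : ℂ) ^ (2 * (0 + 1)) *
              ∫ x in (0:ℝ)..δ, Complex.exp (-(zfun c τ) ^ 2 * x) * (x : ℂ) ^ 0 := by
        filter_upwards [hev] with τ hτ
        obtain ⟨hτ1, hτ0⟩ := hτ
        have hzn := hzne τ hτ1 hτ0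
        rw [exp_int _ hzn]
        ring
      have hlim : Tendsto (fun τ : ℝ => ((τ : ℂ) ^ 2 / (zfun c τ) ^ 2) * 1
          - ((τ : ℂ) ^ 2 / (zfun c τ) ^ 2) * Complex.exp (-(zfun c τ) ^ 2 * δ))
          atTop (nhds (w * 1 - w * 0)) := by
        apply Tendsto.sub (hL1.mul tendsto_const_nhds)
        have h0 := hL2 0
        simp only [pow_zero, one_mul] at h0
        exact hL1.mul h0
      have hfin := hlim.congr' heq
      simpa using hfin
  | succ k ih =>
      have heq : ∀ᶠ τ : ℝ in atTop,
          ((τ : ℂ) ^ 2 / (zfun c τ) ^ 2) *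
            (((k : ℂ) + 1) * ((τ : ℂ) ^ (2 * (k + 1)) *
                ∫ x in (0:ℝ)..δ, Complex.exp (-(zfun c τ) ^ 2 * x) * (x : ℂ) ^ k)
              - (δ : ℂ) ^ (k + 1) * ((τ : ℂ) ^ (2 * (k + 1))
                  * Complex.exp (-(zfun c τ) ^ 2 * δ)))
          = (τ : ℂ) ^ (2 * (k + 1 + 1)) *
              ∫ x in (0:ℝ)..δ, Complex.exp (-(zfun c τ) ^ 2 * x) * (x : ℂ) ^ (k + 1) := by
        filter_upwards [hev] with τ hτ
        obtain ⟨hτ1, hτ0⟩ := hτ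
        have hzn := hzne τ hτ1 hτ0
        rw [ibp _ hzn]
        set J := ∫ x in (0:ℝ)..δ, Complex.exp (-(zfun c τ) ^ 2 * x) * (x : ℂ) ^ k with hJ
        clear_value J
        ring
      have hlim : Tendsto (fun τ : ℝ =>
          ((τ : ℂ) ^ 2 / (zfun c τ) ^ 2) *
            (((k : ℂ) + 1) * ((τ : ℂ) ^ (2 * (k + 1)) *
                ∫ x in (0:ℝ)..δ, Complex.exp (-(zfun c τ) ^ 2 * x) * (x : ℂ) ^ k)
              - (δ : ℂ) ^ (k + 1) * ((τ : ℂ) ^ (2 * (k + 1))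
                  * Complex.exp (-(zfun c τ) ^ 2 * δ))))
          atTop (nhds (w * (((k : ℂ) + 1) * ((k.factorial : ℂ) * w ^ (k + 1))
            - (δ : ℂ) ^ (k + 1) * 0))) := by
        apply hL1.mul
        apply Tendsto.sub
        · exact ih.const_mul _
        · exact (hL2 (2 * (k + 1))).const_mul _
      have hfin := hlim.congr' heq
      have hval : w * (((k : ℂ) + 1) * ((k.factorial : ℂ) * w ^ (k + 1))
          - (δ : ℂ) ^ (k + 1) * 0) = ((k + 1).factorial : ℂ) * w ^ (k + 1 + 1) := by
        rw [Nat.factorial_succ]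
        push_cast
        ring
      rw [hval] at hfin
      exact hfin

theorem stmt_2 (m : ℕ) (c δ : ℝ) (hc : 0 < c) (hδ : 0 < δ) :
    Filter.Tendsto
      (fun τ : ℝ => (τ : ℂ) ^ (2 * (m + 1)) *
        ∫ t in Set.Ioo (0 : ℝ) δ, Complex.exp (-(zfun c τ) ^ 2 * t) * (t : ℂ) ^ m)
      Filter.atTop
      (nhds ((m.factorial : ℂ) * (-Complex.I / (2 * (c : ℂ) ^ 2)) ^ (m + 1))) := by
  have hIoo : ∀ τ : ℝ, (∫ t in Set.Ioo (0 : ℝ) δ, Complex.exp (-(zfun c τ) ^ 2 * t) * (t : ℂ) ^ m)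
      = ∫ x in (0:ℝ)..δ, Complex.exp (-(zfun c τ) ^ 2 * x) * (x : ℂ) ^ m := by
    intro τ
    rw [intervalIntegral.integral_of_le hδ.le, MeasureTheory.integral_Ioc_eq_integral_Ioo]
  simp only [hIoo]
  exact main_aux c δ hc hδ m
end

section
/- Let f ∈ L²(0,T) satisfy |f(t)| ≤ C t^{m'} for almost every t ∈ (0,δ), where C > 0, 0 < δ < T, and m' is a nonnegative integer. Then with z as above, ∫₀^T e^{-z²t} f(t) dt = O(τ^{-(m'+1)}) as τ → ∞. -/
/-!
Since `Re (z²) = τ`, the kernel `exp (-z² t)` has modulus `exp (-τ t)`. On `(0, δ)` the bound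
`‖f t‖ ≤ C tᵐ` gives at most `C ∫₀^∞ tᵐ e^{-τt} dt = C m! τ^{-(m+1)}`, while on `(δ, T]` the
kernel is at most `e^{-τδ}`, which beats every power of `τ`.
-/

open MeasureTheory

open Set Filter Asymptotics Real

lemma zfun_sq_re {c τ : ℝ} (hc : c ≠ 0) (hτ : 1 / c ^ 2 ≤ τ) : ((zfun c τ) ^ 2).re = τ := by
  have hc2 : 0 < c ^ 2 := by positivity
  have hτ0 : 0 < τ := (one_div_pos.mpr hc2).trans_le hτ
  have hrad : 0 ≤ 1 - 1 / (c ^ 2 * τ) := by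
    rw [sub_nonneg, div_le_one (by positivity)]
    rwa [div_le_iff₀ hc2, mul_comm] at hτ
  set r := √(1 - 1 / (c ^ 2 * τ)) with hr
  have hr2 : r * r = 1 - 1 / (c ^ 2 * τ) := Real.mul_self_sqrt hrad
  rw [sq]
  simp only [zfun, ← hr, Complex.mul_re, Complex.mul_im, Complex.neg_re, Complex.neg_im,
    Complex.add_re, Complex.add_im, Complex.one_re, Complex.one_im, Complex.I_re, Complex.I_im,
    Complex.ofReal_re, Complex.ofReal_im]
  linear_combination (norm := skip) (-(c ^ 2 * τ ^ 2)) * hr2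
  field_simp
  ring

lemma norm_cexp_neg_mul_ofReal (s : ℂ) (t : ℝ) :
    ‖Complex.exp (-s * t)‖ = rexp (-(s.re * t)) := by
  simp [Complex.norm_exp]

lemma integrableOn_pow_mul_exp_neg_mul_Ioi (m : ℕ) {r : ℝ} (hr : 0 < r) :
    IntegrableOn (fun t : ℝ => t ^ m * rexp (-(r * t))) (Ioi 0) := by
  refine (integrableOn_rpow_mul_exp_neg_mul_rpow (neg_one_lt_zero.trans_le m.cast_nonneg)
    one_pos hr).congr_fun (fun t _ => ?_) measurableSet_Ioi
  simp only [Real.rpow_natCast, Real.rpow_one, neg_mul]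

lemma integral_pow_mul_exp_neg_mul_Ioi (m : ℕ) {r : ℝ} (hr : 0 < r) :
    ∫ t in Ioi (0 : ℝ), t ^ m * rexp (-(r * t)) = m.factorial * r ^ (-(m + 1 : ℝ)) := by
  have h := Real.integral_rpow_mul_exp_neg_mul_Ioi (by positivity : (0 : ℝ) < m + 1) hr
  rw [add_sub_cancel_right, Real.Gamma_nat_eq_factorial] at h
  simp only [Real.rpow_natCast] at h
  rw [h, one_div, Real.inv_rpow hr.le, ← Real.rpow_neg hr.le, mul_comm]

section Laplace

variable {E : Type*} [NormedAddCommGroup E] [NormedSpace ℂ E] {f : ℝ → E} {s : ℂ}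
  {δ T C : ℝ} {m : ℕ}

lemma norm_setIntegral_Ioc_zero_cexp_smul_le (hs : 0 < s.re) (hC : 0 ≤ C)
    (hbound : ∀ᵐ t ∂(volume.restrict (Ioo 0 δ)), ‖f t‖ ≤ C * t ^ m) :
    ‖∫ t in Ioc 0 δ, Complex.exp (-s * t) • f t‖ ≤ C * m.factorial * s.re ^ (-(m + 1 : ℝ)) := by
  have hmaj : IntegrableOn (fun t : ℝ => C * (t ^ m * rexp (-(s.re * t)))) (Ioi 0) :=
    (integrableOn_pow_mul_exp_neg_mul_Ioi m hs).const_mul C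
  rw [integral_Ioc_eq_integral_Ioo]
  calc ‖∫ t in Ioo 0 δ, Complex.exp (-s * t) • f t‖
      ≤ ∫ t in Ioo 0 δ, C * (t ^ m * rexp (-(s.re * t))) := by
        refine norm_integral_le_of_norm_le (hmaj.mono_set Ioo_subset_Ioi_self) ?_
        filter_upwards [hbound] with t ht
        rw [norm_smul, norm_cexp_neg_mul_ofReal]
        nlinarith [Real.exp_pos (-(s.re * t)), norm_nonneg (f t)]
    _ ≤ ∫ t in Ioi 0, C * (t ^ m * rexp (-(s.re * t))) := by
        refine setIntegral_mono_set hmaj ?_ Ioo_subset_Ioi_self.eventuallyLE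
        filter_upwards [ae_restrict_mem measurableSet_Ioi] with t (ht : 0 < t)
        positivity
    _ = C * m.factorial * s.re ^ (-(m + 1 : ℝ)) := by
        rw [integral_const_mul, integral_pow_mul_exp_neg_mul_Ioi m hs, mul_assoc]

lemma norm_setIntegral_Ioc_cexp_smul_le (hs : 0 ≤ s.re)
    (hf : IntegrableOn f (Ioc δ T)) :
    ‖∫ t in Ioc δ T, Complex.exp (-s * t) • f t‖ ≤ rexp (-(s.re * δ)) * ∫ t in Ioc δ T, ‖f t‖ := by
  rw [← integral_const_mul]
  refine norm_integral_le_of_norm_le (hf.norm.const_mul _) ?_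
  filter_upwards [ae_restrict_mem measurableSet_Ioc] with t ht
  rw [norm_smul, norm_cexp_neg_mul_ofReal]
  gcongr
  nlinarith [ht.1]

lemma isBigO_setIntegral_Ioc_cexp_smul {s : ℝ → ℂ} (hs : ∀ᶠ τ in atTop, (s τ).re = τ)
    (hδ : 0 < δ) (hδT : δ ≤ T) (hC : 0 ≤ C) (hf : IntegrableOn f (Ioc 0 T))
    (hbound : ∀ᵐ t ∂(volume.restrict (Ioo 0 δ)), ‖f t‖ ≤ C * t ^ m) :
    (fun τ => ∫ t in Ioc 0 T, Complex.exp (-s τ * t) • f t) =O[atTop]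
      fun τ => τ ^ (-(m + 1 : ℝ)) := by
  set M := ∫ t in Ioc δ T, ‖f t‖
  have hsplit (σ : ℂ) : ∫ t in Ioc 0 T, Complex.exp (-σ * t) • f t =
      (∫ t in Ioc 0 δ, Complex.exp (-σ * t) • f t) + ∫ t in Ioc δ T, Complex.exp (-σ * t) • f t := by
    have hk : Continuous fun t : ℝ => Complex.exp (-σ * t) := by fun_prop
    have hg := IntegrableOn.continuousOn_smul_of_subset hk.continuousOn hf isCompact_Icc
      measurableSet_Ioc Ioc_subset_Icc_self
    rw [← setIntegral_union (Ioc_disjoint_Ioc_of_le le_rfl) measurableSet_Ioc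
      (hg.mono_set (Ioc_subset_Ioc_right hδT)) (hg.mono_set (Ioc_subset_Ioc_left hδ.le)),
      Ioc_union_Ioc_eq_Ioc hδ.le hδT]
  have hmajorant : (fun τ => C * m.factorial * τ ^ (-(m + 1 : ℝ)) + M * rexp (-δ * τ))
      =O[atTop] fun τ => τ ^ (-(m + 1 : ℝ)) :=
    ((isBigO_refl _ _).const_mul_left _).add
      ((isLittleO_exp_neg_mul_rpow_atTop hδ _).isBigO.const_mul_left M)
  refine IsBigO.trans (IsBigO.of_bound 1 ?_) hmajorant
  filter_upwards [hs, eventually_gt_atTop 0] with τ hτ hτ0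
  have hnear := norm_setIntegral_Ioc_zero_cexp_smul_le (hτ ▸ hτ0) hC hbound
  have hfar := norm_setIntegral_Ioc_cexp_smul_le (hτ ▸ hτ0.le)
    (hf.mono_set (Ioc_subset_Ioc_left hδ.le))
  rw [hτ] at hnear hfar
  rw [one_mul, hsplit, Real.norm_eq_abs]
  calc _ ≤ _ := norm_add_le _ _
    _ ≤ C * m.factorial * τ ^ (-(m + 1 : ℝ)) + M * rexp (-δ * τ) := by
        rw [neg_mul, mul_comm δ, mul_comm M]
        exact add_le_add hnear hfar
    _ ≤ _ := le_abs_self _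

end Laplace

theorem stmt_3 (c T δ C : ℝ) (hc : 0 < c) (hδ : 0 < δ) (hδT : δ < T) (hC : 0 < C)
    (m' : ℕ) (f : ℝ → ℂ)
    (hf : MemLp f 2 (volume.restrict (Set.Ioc (0 : ℝ) T)))
    (hbound : ∀ᵐ t ∂(volume.restrict (Set.Ioo (0 : ℝ) δ)), ‖f t‖ ≤ C * t ^ m') :
    (fun τ : ℝ => ∫ t in Set.Ioc (0 : ℝ) T, Complex.exp (-(zfun c τ) ^ 2 * t) * f t)
      =O[Filter.atTop] fun τ : ℝ => τ ^ (-(m' + 1 : ℝ)) := by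
  have hre : ∀ᶠ τ in atTop, (zfun c τ ^ 2).re = τ :=
    (eventually_ge_atTop (1 / c ^ 2)).mono fun τ hτ => zfun_sq_re hc.ne' hτ
  simpa only [smul_eq_mul] using isBigO_setIntegral_Ioc_cexp_smul hre hδ hδT.le hC.le
    (hf.integrable one_le_two) hbound
end

section
/- With the notation of the previous statement and z = -cτ(1 + i√(1 - 1/(c²τ))) for c > 0 fixed, one has det(R)·T₁₂·e^{(a−b)z₂} = 1 + O(exp(−2cτ·min(b/√γ₁, (a−b)/√γ₂))) as τ → ∞; in particular R is invertible for all sufficiently large τ. -/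
noncomputable def Rmat (a b γ₁ γ₂ c τ : ℝ) : Matrix (Fin 2) (Fin 2) ℂ :=
  let z₁ : ℂ := zfun c τ / Real.sqrt γ₁
  let z₂ : ℂ := zfun c τ / Real.sqrt γ₂
  let T₁₂ : ℂ := (2 * Real.sqrt γ₁ / (Real.sqrt γ₁ + Real.sqrt γ₂) : ℝ)
  let R₁₂ : ℂ := ((Real.sqrt γ₁ - Real.sqrt γ₂) / (Real.sqrt γ₁ + Real.sqrt γ₂) : ℝ)
  !![Complex.exp ((a - b) * z₂), -Complex.exp (-(a - b) * z₂);
     (1 / T₁₂) * (1 - R₁₂ * Complex.exp (2 * b * z₁)),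
     (1 / T₁₂) * (R₁₂ - Complex.exp (2 * b * z₁))]

/-!
Expanding the determinant and using `e^{-(a-b)z₂} e^{(a-b)z₂} = 1` gives
`det R · T₁₂ · e^{(a-b)z₂} - 1 = R₁₂ e^{2(a-b)z₂} - e^{2bz₁} e^{2(a-b)z₂} - R₁₂ e^{2bz₁}`.
Since `|R₁₂| ≤ 1` and both exponentials have modulus at most `e^{-2cτ min(b/√γ₁, (a-b)/√γ₂)} ≤ 1`,
the right-hand side is at most three times that bound, which tends to `0`; once it is below `1`
the determinant cannot vanish.
-/

open Filter Topology

lemma det_fin_two_of_mul_mul_sub_one {K : Type*} [Field K] {T ρ E F G : K} (hT : T ≠ 0)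
    (hFE : F * E = 1) :
    !![E, -F; 1 / T * (1 - ρ * G), 1 / T * (ρ - G)].det * T * E - 1
      = ρ * E ^ 2 - G * E ^ 2 - ρ * G := by
  rw [Matrix.det_fin_two_of]
  field_simp
  linear_combination (1 - ρ * G) * hFE

lemma norm_mul_sub_mul_sub_mul_le {A : Type*} [SeminormedRing A] {r g h : A} {ε : ℝ}
    (hr : ‖r‖ ≤ 1) (hg : ‖g‖ ≤ ε) (hh : ‖h‖ ≤ ε) (hε : ε ≤ 1) :
    ‖r * h - g * h - r * g‖ ≤ 3 * ε :=
  calc ‖r * h - g * h - r * g‖ ≤ ‖r * h‖ + ‖g * h‖ + ‖r * g‖ :=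
        (norm_sub_le _ _).trans (by gcongr; exact norm_sub_le _ _)
    _ ≤ ‖r‖ * ‖h‖ + ‖g‖ * ‖h‖ + ‖r‖ * ‖g‖ := by gcongr <;> exact norm_mul_le _ _
    _ ≤ 3 * ε := by nlinarith [norm_nonneg r, norm_nonneg g, norm_nonneg h]

lemma abs_sub_div_add_le_one {x y : ℝ} (hx : 0 ≤ x) (hy : 0 ≤ y) : |(x - y) / (x + y)| ≤ 1 := by
  rw [abs_div, abs_of_nonneg (add_nonneg hx hy)]
  exact div_le_one_of_le₀ (abs_sub_le_iff.2 ⟨by linarith, by linarith⟩) (add_nonneg hx hy)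

lemma re_zfun (c τ : ℝ) : (zfun c τ).re = -(c * τ) := by simp [zfun]

lemma norm_exp_mul_zfun_div (r s c τ : ℝ) :
    ‖Complex.exp (r * (zfun c τ / s))‖ = Real.exp (-(c * τ) * r / s) := by
  rw [Complex.norm_exp, show (r : ℂ) * (zfun c τ / s) = ((r / s : ℝ) : ℂ) * zfun c τ by
    push_cast; ring, Complex.re_ofReal_mul, re_zfun]
  ring_nf

lemma norm_exp_two_mul_zfun_div_le {r s c τ m : ℝ} (hcτ : 0 ≤ c * τ) (hm : m ≤ r / s) :
    ‖Complex.exp (((2 * r : ℝ) : ℂ) * (zfun c τ / s))‖ ≤ Real.exp (-2 * c * τ * m) := by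
  rw [norm_exp_mul_zfun_div, Real.exp_le_exp,
    show -(c * τ) * (2 * r) / s = -2 * (c * τ) * (r / s) by ring]
  nlinarith [mul_le_mul_of_nonneg_left hm hcτ]

lemma det_Rmat_mul_sub_one (a b γ₁ γ₂ c τ : ℝ) (h1 : 0 < γ₁) :
    (Rmat a b γ₁ γ₂ c τ).det *
        ((2 * Real.sqrt γ₁ / (Real.sqrt γ₁ + Real.sqrt γ₂) : ℝ) : ℂ) *
        Complex.exp ((a - b) * (zfun c τ / Real.sqrt γ₂)) - 1 =
      (((Real.sqrt γ₁ - Real.sqrt γ₂) / (Real.sqrt γ₁ + Real.sqrt γ₂) : ℝ) : ℂ) *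
          Complex.exp (((2 * (a - b) : ℝ) : ℂ) * (zfun c τ / Real.sqrt γ₂))
        - Complex.exp (((2 * b : ℝ) : ℂ) * (zfun c τ / Real.sqrt γ₁)) *
            Complex.exp (((2 * (a - b) : ℝ) : ℂ) * (zfun c τ / Real.sqrt γ₂))
        - (((Real.sqrt γ₁ - Real.sqrt γ₂) / (Real.sqrt γ₁ + Real.sqrt γ₂) : ℝ) : ℂ) *
            Complex.exp (((2 * b : ℝ) : ℂ) * (zfun c τ / Real.sqrt γ₁)) := by
  have hs1 : 0 < Real.sqrt γ₁ := Real.sqrt_pos.2 h1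
  set z₂ : ℂ := zfun c τ / Real.sqrt γ₂
  have hT : ((2 * Real.sqrt γ₁ / (Real.sqrt γ₁ + Real.sqrt γ₂) : ℝ) : ℂ) ≠ 0 := by
    rw [Complex.ofReal_ne_zero]; positivity
  have hFE : Complex.exp (-((a : ℂ) - b) * z₂) * Complex.exp ((a - b) * z₂) = 1 := by
    rw [← Complex.exp_add, neg_mul, neg_add_cancel, Complex.exp_zero]
  have hE2 : Complex.exp ((a - b) * z₂) ^ 2 = Complex.exp (((2 * (a - b) : ℝ) : ℂ) * z₂) := by
    rw [← Complex.exp_nat_mul]; push_cast; ring_nf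
  rw [Rmat, det_fin_two_of_mul_mul_sub_one hT hFE, hE2]
  push_cast
  ring_nf

lemma norm_det_Rmat_mul_sub_one_le {a b γ₁ γ₂ c τ : ℝ} (hb : 0 ≤ b) (hba : b ≤ a)
    (h1 : 0 < γ₁) (hc : 0 ≤ c) (hτ : 0 ≤ τ) :
    ‖(Rmat a b γ₁ γ₂ c τ).det *
            ((2 * Real.sqrt γ₁ / (Real.sqrt γ₁ + Real.sqrt γ₂) : ℝ) : ℂ) *
            Complex.exp ((a - b) * (zfun c τ / Real.sqrt γ₂)) - 1‖
      ≤ 3 * Real.exp (-2 * c * τ * min (b / Real.sqrt γ₁) ((a - b) / Real.sqrt γ₂)) := by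
  have hcτ : 0 ≤ c * τ := mul_nonneg hc hτ
  have hm : 0 ≤ min (b / Real.sqrt γ₁) ((a - b) / Real.sqrt γ₂) :=
    le_min (by positivity) (div_nonneg (by linarith) (Real.sqrt_nonneg _))
  rw [det_Rmat_mul_sub_one a b γ₁ γ₂ c τ h1]
  refine norm_mul_sub_mul_sub_mul_le ?_ (norm_exp_two_mul_zfun_div_le hcτ (min_le_left _ _))
    (norm_exp_two_mul_zfun_div_le hcτ (min_le_right _ _)) ?_
  · rw [Complex.norm_real, Real.norm_eq_abs]
    exact abs_sub_div_add_le_one (Real.sqrt_nonneg _) (Real.sqrt_nonneg _)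
  · rw [Real.exp_le_one_iff]
    nlinarith [mul_nonneg hcτ hm]

theorem stmt_7 (a b : ℝ) (hb : 0 < b) (hba : b < a) (γ₁ γ₂ : ℝ) (h1 : 0 < γ₁) (h2 : 0 < γ₂)
    (c : ℝ) (hc : 0 < c) :
    (∃ C τ₀ : ℝ, 0 < C ∧ ∀ τ : ℝ, τ₀ < τ →
      ‖(Rmat a b γ₁ γ₂ c τ).det *
            ((2 * Real.sqrt γ₁ / (Real.sqrt γ₁ + Real.sqrt γ₂) : ℝ) : ℂ) *
            Complex.exp ((a - b) * (zfun c τ / Real.sqrt γ₂)) - 1‖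
        ≤ C * Real.exp (-2 * c * τ * min (b / Real.sqrt γ₁) ((a - b) / Real.sqrt γ₂))) ∧
    ∃ τ₁ : ℝ, ∀ τ : ℝ, τ₁ < τ → (Rmat a b γ₁ γ₂ c τ).det ≠ 0 := by
  set m := min (b / Real.sqrt γ₁) ((a - b) / Real.sqrt γ₂)
  have hm : 0 < m := lt_min (div_pos hb (Real.sqrt_pos.2 h1))
    (div_pos (by linarith) (Real.sqrt_pos.2 h2))
  have hbound : ∀ τ : ℝ, 0 ≤ τ → _ := fun τ hτ ↦
    norm_det_Rmat_mul_sub_one_le (γ₂ := γ₂) hb.le hba.le h1 hc.le hτ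
  refine ⟨⟨3, 0, by norm_num, fun τ hτ ↦ hbound τ hτ.le⟩, ?_⟩
  have hdecay : Tendsto (fun τ ↦ 3 * Real.exp (-2 * c * τ * m)) atTop (𝓝 0) := by
    simpa using ((Real.tendsto_exp_atBot.comp ((tendsto_id.const_mul_atTop_of_neg
      (by linarith : -2 * c < 0)).atBot_mul_const hm)).const_mul 3)
  obtain ⟨τ₁, hτ₁⟩ := eventually_atTop.1
    ((hdecay.eventually (gt_mem_nhds one_pos)).and (eventually_ge_atTop 0))
  refine ⟨τ₁, fun τ hτ hdet ↦ ?_⟩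
  obtain ⟨hsmall, hτ0⟩ := hτ₁ τ hτ.le
  have hnorm := hbound τ hτ0
  rw [hdet, zero_mul, zero_mul, zero_sub, norm_neg, norm_one] at hnorm
  linarith
end

section
/- Let γ₁, …, γ_m > 0, and for j = 1, …, m set K_j = [[1,1],[√γ_j, −√γ_j]] and P = [[1,0],[0,0]]. Then (K₂PK₂⁻¹)(K₃PK₃⁻¹)⋯(K_mPK_m⁻¹) = c_m · (column (1, √γ₂))·(row (√γ_m, 1)), where c_m = (1/2)^{m-1} ∏_{j=2}^{m-1}(√γ_j+√γ_{j+1}) / √(∏_{j=2}^m γ_j). Moreover K₁⁻¹ · (column (1,√γ₂))·(row (√γ_m,1)) · K_m = √(γ_m/γ₁)·(√γ₁+√γ₂)·[[1, 0], [(√γ₁−√γ₂)/(√γ₁+√γ₂), 0]]. -/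
noncomputable def Kmat (g : ℝ) : Matrix (Fin 2) (Fin 2) ℝ :=
  !![1, 1; Real.sqrt g, -Real.sqrt g]

def Pmat : Matrix (Fin 2) (Fin 2) ℝ := !![1, 0; 0, 0]

lemma Kinv (g : ℝ) (hg : 0 < g) :
    (Kmat g)⁻¹ = !![1/2, 1/(2*Real.sqrt g); 1/2, -(1/(2*Real.sqrt g))] := by
  have hs : Real.sqrt g ≠ 0 := ne_of_gt (Real.sqrt_pos.2 hg)
  apply Matrix.inv_eq_right_inv
  rw [Kmat]
  ext i j
  fin_cases i <;> fin_cases j <;>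
    simp [Matrix.mul_apply, Fin.sum_univ_two] <;> field_simp <;> ring

lemma vmv_mul (u v u' v' : Fin 2 → ℝ) :
    Matrix.vecMulVec u v * Matrix.vecMulVec u' v' =
      (v 0 * u' 0 + v 1 * u' 1) • Matrix.vecMulVec u v' := by
  ext i j
  fin_cases i <;> fin_cases j <;>
    simp [Matrix.vecMulVec_apply, Matrix.mul_apply, Fin.sum_univ_two] <;> ring

lemma KPKinv (g : ℝ) (hg : 0 < g) :
    Kmat g * Pmat * (Kmat g)⁻¹ =
      (1/(2*Real.sqrt g)) • Matrix.vecMulVec ![1, Real.sqrt g] ![Real.sqrt g, 1] := by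
  have hs : Real.sqrt g ≠ 0 := ne_of_gt (Real.sqrt_pos.2 hg)
  have hsq : Real.sqrt g ^ 2 = g := Real.sq_sqrt hg.le
  rw [Kinv g hg, Kmat, Pmat]
  ext i j
  fin_cases i <;> fin_cases j <;>
    simp [Matrix.vecMulVec_apply, Matrix.mul_apply, Fin.sum_univ_two] <;>
      field_simp <;> nlinarith [hsq]

lemma main_prod (m : ℕ) (hm : 2 ≤ m) (γ : ℕ → ℝ) :
    (∀ j, 2 ≤ j → j ≤ m → 0 < γ j) →
    (((List.range (m - 1)).map
        (fun i => Kmat (γ (i + 2)) * Pmat * (Kmat (γ (i + 2)))⁻¹)).prod =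
      ((1 / 2) ^ (m - 1) *
          (∏ j ∈ Finset.Icc 2 (m - 1), (Real.sqrt (γ j) + Real.sqrt (γ (j + 1)))) /
          Real.sqrt (∏ j ∈ Finset.Icc 2 m, γ j)) •
        Matrix.vecMulVec ![1, Real.sqrt (γ 2)] ![Real.sqrt (γ m), 1]) := by
  induction m, hm using Nat.le_induction with
  | base =>
    intro hγ
    have h2 : (0:ℝ) < γ 2 := hγ 2 le_rfl le_rfl
    rw [show (2:ℕ) - 1 = 1 from rfl, show List.range 1 = [0] from rfl, List.map_singleton,
      List.prod_singleton, KPKinv _ h2]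
    congr 1
    rw [show Finset.Icc 2 1 = (∅ : Finset ℕ) by decide, Finset.prod_empty,
      Finset.Icc_self, Finset.prod_singleton]
    ring
  | succ n hn IH =>
    intro hγ
    obtain ⟨k, rfl⟩ : ∃ k, n = k + 2 := ⟨n - 2, by omega⟩
    have hγ' : ∀ j, 2 ≤ j → j ≤ k + 2 → 0 < γ j := fun j h2 hj => hγ j h2 (by omega)
    have hlast : (0:ℝ) < γ (k + 3) := hγ (k+3) (by omega) (by omega)
    have hk2 : (0:ℝ) < γ (k + 2) := hγ (k+2) (by omega) (by omega)
    have hprodpos : (0:ℝ) < ∏ j ∈ Finset.Icc 2 (k+2), γ j := by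
      apply Finset.prod_pos
      intro j hj
      simp only [Finset.mem_Icc] at hj
      exact hγ' j hj.1 hj.2
    have hs3 : (0:ℝ) < Real.sqrt (γ (k+3)) := Real.sqrt_pos.2 hlast
    have hsp : (0:ℝ) < Real.sqrt (∏ j ∈ Finset.Icc 2 (k+2), γ j) := Real.sqrt_pos.2 hprodpos
    rw [show k + 2 - 1 = k + 1 by omega] at IH
    rw [show k + 2 + 1 - 1 = k + 2 by omega, List.range_succ,
      show k + 1 + 2 = k + 3 by omega, show k + 2 + 1 = k + 3 by omega, List.map_append, List.prod_append, List.map_singleton,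
      List.prod_singleton, IH hγ', KPKinv _ hlast, Matrix.smul_mul, Matrix.mul_smul,
      vmv_mul, smul_smul, smul_smul]
    have e1 : ∏ j ∈ Finset.Icc 2 (k+2), (Real.sqrt (γ j) + Real.sqrt (γ (j+1))) =
        (∏ j ∈ Finset.Icc 2 (k+1), (Real.sqrt (γ j) + Real.sqrt (γ (j+1)))) *
          (Real.sqrt (γ (k+2)) + Real.sqrt (γ (k+3))) := by
      rw [Finset.prod_Icc_succ_top (by omega)]
    have e2 : Real.sqrt (∏ j ∈ Finset.Icc 2 (k+3), γ j) =
        Real.sqrt (∏ j ∈ Finset.Icc 2 (k+2), γ j) * Real.sqrt (γ (k+3)) := by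
      rw [Finset.prod_Icc_succ_top (by omega : 2 ≤ k + 2 + 1), Real.sqrt_mul hprodpos.le]
    congr 1
    rw [e1, e2]
    simp only [Matrix.cons_val_zero, Matrix.cons_val_one, Matrix.head_cons]
    field_simp
    ring_nf

lemma second_part (g1 g2 gm : ℝ) (h1 : 0 < g1) (h2 : 0 < g2) (hm : 0 < gm) :
    (Kmat g1)⁻¹ * Matrix.vecMulVec ![1, Real.sqrt g2] ![Real.sqrt gm, 1] * Kmat gm =
      (Real.sqrt (gm / g1) * (Real.sqrt g1 + Real.sqrt g2)) •
        !![1, 0; (Real.sqrt g1 - Real.sqrt g2) / (Real.sqrt g1 + Real.sqrt g2), 0] := by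
  have hs1 : (0:ℝ) < Real.sqrt g1 := Real.sqrt_pos.2 h1
  have hs2 : (0:ℝ) < Real.sqrt g2 := Real.sqrt_pos.2 h2
  have hsum : Real.sqrt g1 + Real.sqrt g2 ≠ 0 := by positivity
  have hdiv : Real.sqrt (gm / g1) = Real.sqrt gm / Real.sqrt g1 := Real.sqrt_div hm.le g1
  have hv : Matrix.vecMulVec ![1, Real.sqrt g2] ![Real.sqrt gm, 1] =
      !![Real.sqrt gm, 1; Real.sqrt g2 * Real.sqrt gm, Real.sqrt g2] := by
    ext i j
    fin_cases i <;> fin_cases j <;> simp [Matrix.vecMulVec_apply]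
  rw [Kinv g1 h1, Kmat, hdiv, hv]
  ext i j
  fin_cases i <;> fin_cases j <;>
    simp [Matrix.vecMulVec_apply, Matrix.mul_apply, Fin.sum_univ_two] <;>
      field_simp <;> ring

theorem stmt_9 (m : ℕ) (hm : 2 ≤ m) (γ : ℕ → ℝ) (hγ : ∀ j, 1 ≤ j → j ≤ m → 0 < γ j) :
    (((List.range (m - 1)).map
        (fun i => Kmat (γ (i + 2)) * Pmat * (Kmat (γ (i + 2)))⁻¹)).prod =
      ((1 / 2) ^ (m - 1) *
          (∏ j ∈ Finset.Icc 2 (m - 1), (Real.sqrt (γ j) + Real.sqrt (γ (j + 1)))) /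
          Real.sqrt (∏ j ∈ Finset.Icc 2 m, γ j)) •
        Matrix.vecMulVec ![1, Real.sqrt (γ 2)] ![Real.sqrt (γ m), 1]) ∧
    (Kmat (γ 1))⁻¹ *
        Matrix.vecMulVec ![1, Real.sqrt (γ 2)] ![Real.sqrt (γ m), 1] * Kmat (γ m) =
      (Real.sqrt (γ m / γ 1) * (Real.sqrt (γ 1) + Real.sqrt (γ 2))) •
        !![1, 0;
           (Real.sqrt (γ 1) - Real.sqrt (γ 2)) / (Real.sqrt (γ 1) + Real.sqrt (γ 2)), 0] := by
  exact ⟨main_prod m hm γ (fun j h2 hj => hγ j (by omega) hj),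
    second_part _ _ _ (hγ 1 le_rfl (by omega)) (hγ 2 one_le_two hm) (hγ m (by omega) le_rfl)⟩
end
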